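/- arXiv:2502.20618 — 2 statements merged into one kernel-verified Lean document; each statement's English description precedes it below -/
import Mathlib

section
/- With G, M, B, φ, A as in the context: for every subgroup H of G, the induced map B^H → M^H on H-invariants is surjective; consequently, the kernel A = ker(φ) satisfies H¹(H, A) = 0 for every subgroup H of G (that is, A is a coflasque ℤ[G]-lattice). -/
/-- The Klein four group `ℤ/2 × ℤ/2`, written multiplicatively. -/
abbrev K4 : Type := Multiplicative (ZMod 2 × ZMod 2)

/-- The generator `g` of the Klein four group. -/
def kg : K4 := Multiplicative.ofAdd (1, 0)

/-- The generator `h` of the Klein four group. -/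
def kh : K4 := Multiplicative.ofAdd (0, 1)

/-- The underlying `F₂`-vector space of the module `Ω^{-m} F₂`: basis vectors
`e₁, …, e_{m+1}` live in the first factor and `e_{m+2}, …, e_{2m+1}` in the second. -/
abbrev MM (m : ℕ) : Type := (Fin (m + 1) → ZMod 2) × (Fin m → ZMod 2)

/-- The basis vector `e_{j+1}` (for `0 ≤ j ≤ m`, i.e. `e_i` with `1 ≤ i ≤ m+1`). -/
def ea (m : ℕ) (j : Fin (m + 1)) : MM m := (Pi.single j 1, 0)

/-- The basis vector `e_{m+1+(j+1)}` (for `0 ≤ j ≤ m-1`, i.e. `e_{m+1+i}` with `1 ≤ i ≤ m`). -/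
def eb (m : ℕ) (j : Fin m) : MM m := (0, Pi.single j 1)

/-- The permutation `ℤ[G]`-module `B = (ℤ[G])^{⊕ m} ⊕ ℤ^{⊕ (m+1)}`. -/
abbrev BB (m : ℕ) : Type := (Fin m → MonoidAlgebra ℤ K4) × (Fin (m + 1) → ℤ)

/-- The `ℤ[G]`-module generator `f_{i+1}` of the `(i+1)`-st free summand of `B`
(for `0 ≤ i ≤ m-1`, i.e. `f_i` with `1 ≤ i ≤ m`). -/
noncomputable def fa (m : ℕ) (i : Fin m) : BB m := (Pi.single i 1, 0)

/-- The generator `f_{m+(j+1)}` of the `(j+1)`-st trivial summand of `B`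
(for `0 ≤ j ≤ m`, i.e. `f_{m+i}` with `1 ≤ i ≤ m+1`). -/
noncomputable def fb (m : ℕ) (j : Fin (m + 1)) : BB m := (0, Pi.single j 1)

/-- The action of `γ ∈ G` on `B`: left multiplication on each `ℤ[G]`-summand and the
trivial action on each `ℤ`-summand. -/
noncomputable def bAct (m : ℕ) (γ : K4) (b : BB m) : BB m :=
  (fun i => MonoidAlgebra.of ℤ K4 γ * b.1 i, b.2)


/-! An element of `M` fixed by some `γ ≠ 1` has no `e_{m+1+i}`-components, because `ρ γ - 1`
maps `∑ xᵢ e_{m+1+i}` injectively into the span of `e₁, …, e_{m+1}` (as `∑ xᵢ e_i`, `∑ xᵢ e_{i+1}`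
or `∑ xᵢ (e_i + e_{i+1})`). Such an element lifts to the trivial summands `ℤ^{m+1}`, and for
`H = 1` every element lifts, which gives surjectivity on invariants.

For `H¹(H, A) = 0`: both `H¹(H, ℤ) = Hom(H, ℤ)` and `H¹(H, ℤ[G])` vanish, the latter because
`ℤ[G]` is free over `ℤ[H]`. So an `A`-valued cocycle is `σ ↦ σ b - b` for some `b ∈ B`; then `φ b`
is `H`-invariant, hence equal to `φ b'` with `b' ∈ B^H`, and `b - b' ∈ A` bounds the cocycle. -/

theorem MonoidAlgebra.exists_coboundary_of_cocycle {k G : Type*} [Ring k] [Group G] [Finite G]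
    (H : Subgroup G) (c : H → MonoidAlgebra k G)
    (hc : ∀ σ τ : H, c (σ * τ) = c σ + of k G σ * c τ) :
    ∃ b : MonoidAlgebra k G, ∀ σ : H, c σ = of k G σ * b - b := by
  let rep : G → G := fun y => (Quotient.mk (QuotientGroup.rightRel H) y).out
  have rep_mem (y : G) : rep y * y⁻¹ ∈ H := by
    simpa using H.inv_mem <|
      QuotientGroup.rightRel_apply.mp (Quotient.mk_out (s := QuotientGroup.rightRel H) y)
  have rep_mul (σ : H) (y : G) : rep (σ * y) = rep y :=
    congrArg Quotient.out <| Quotient.sound <| QuotientGroup.rightRel_apply.mpr <| by simp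
  -- the solution is normalised to vanish at the chosen representatives of the cosets `H y`
  let b : G → k := fun y => (c ⟨rep y * y⁻¹, rep_mem y⟩).coeff (rep y)
  have hb (σ : H) (y : G) : b ((σ : G)⁻¹ * y) = b y + (c σ).coeff y := by
    have hσ : (⟨rep y * (y⁻¹ * σ), by simpa [← mul_assoc] using H.mul_mem (rep_mem y) σ.2⟩ : H) =
        ⟨rep y * y⁻¹, rep_mem y⟩ * σ := Subtype.ext (mul_assoc _ _ _).symm
    simp only [b, mul_inv_rev, inv_inv, ← Subgroup.coe_inv, rep_mul]
    rw [hσ, hc, coeff_add, Finsupp.add_apply, of_apply, coeff_single_mul_apply, one_mul]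
    simp
  refine ⟨ofCoeff (Finsupp.equivFunOnFinite.symm b), fun σ => ?_⟩
  ext y
  simp [hb]

theorem eq_zero_of_map_mul_eq_add {H A : Type*} [Group H] [Finite H] [AddCommGroup A]
    [IsAddTorsionFree A] (f : H → A) (hf : ∀ σ τ, f (σ * τ) = f σ + f τ) (σ : H) : f σ = 0 := by
  let F : H →* Multiplicative A := MonoidHom.mk' (fun σ => .ofAdd (f σ)) hf
  have hσ : F σ ^ orderOf σ = 1 := by rw [← map_pow, pow_orderOf_eq_one, map_one]
  exact (nsmul_eq_zero_iff_right (orderOf_pos σ).ne').mp (congrArg Multiplicative.toAdd hσ)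

theorem Function.Injective.extend_piSingle {ι η R : Type*} [DecidableEq ι] [DecidableEq η]
    [Zero R] {s : ι → η} (hs : s.Injective) (i : ι) (r : R) :
    Function.extend s (Pi.single i r) 0 = Pi.single (s i) r := by
  ext k
  by_cases hk : ∃ i', s i' = k
  · obtain ⟨i', rfl⟩ := hk
    simp [hs.extend_apply, Pi.single_apply, hs.eq_iff]
  · rw [Function.extend_apply' _ _ _ hk, Pi.single_eq_of_ne (fun h => hk ⟨i, h.symm⟩)]
    rfl

theorem Fin.eq_zero_of_extend_castSucc_eq_extend_succ {R : Type*} [Zero R] {m : ℕ}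
    {v : Fin m → R} (h : Function.extend castSucc v 0 = Function.extend succ v 0) : v = 0 := by
  have key (n : ℕ) (hn : n < m) : v ⟨n, hn⟩ = 0 := by
    induction n with
    | zero =>
      have := congrFun h (castSucc ⟨0, hn⟩)
      rwa [(castSucc_injective m).extend_apply, Function.extend_apply' _ _ _ (by
        rintro ⟨i, hi⟩; simpa using congrArg val hi)] at this
    | succ n ih =>
      have := congrFun h (succ ⟨n, by omega⟩)
      rwa [(succ_injective m).extend_apply, ih (by omega),
        show succ ⟨n, _⟩ = castSucc ⟨n + 1, hn⟩ from rfl, (castSucc_injective m).extend_apply] at this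
  funext i
  exact key i i.2

theorem K4.eq_one_or_eq_kg_or_eq_kh_or_eq_kg_mul_kh :
    ∀ γ : K4, γ = 1 ∨ γ = kg ∨ γ = kh ∨ γ = kg * kh := by
  decide

section

variable {m : ℕ}

theorem MM.linearMap_ext {N : Type*} [AddCommGroup N] [Module (ZMod 2) N]
    {f g : MM m →ₗ[ZMod 2] N} (ha : ∀ j, f (ea m j) = g (ea m j))
    (hb : ∀ i, f (eb m i) = g (eb m i)) : f = g :=
  LinearMap.prod_ext ((Pi.basisFun _ _).ext fun j => by simpa [ea] using ha j)
    ((Pi.basisFun _ _).ext fun i => by simpa [eb] using hb i)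

theorem MM.apply_eq_add_extend (T : MM m →ₗ[ZMod 2] MM m) (s : Fin m → Fin (m + 1))
    (hs : s.Injective) (ha : ∀ j, T (ea m j) = ea m j)
    (hb : ∀ i, T (eb m i) = ea m (s i) + eb m i) (x : MM m) :
    T x = x + (Function.extend s x.2 0, 0) := by
  let E : MM m →ₗ[ZMod 2] MM m := LinearMap.id +
    LinearMap.inl (ZMod 2) _ _ ∘ₗ Function.ExtendByZero.linearMap (ZMod 2) s ∘ₗ LinearMap.snd _ _ _
  suffices T = E from congrArg (· x) this
  refine MM.linearMap_ext (fun j => ?_) (fun i => ?_)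
  · rw [ha]
    simp [E, ea]
  · rw [hb]
    simp [E, ea, eb]
    exact (hs.extend_piSingle i 1).symm

theorem MM.snd_eq_zero_of_apply_eq_self (ρ : Representation (ZMod 2) K4 (MM m))
    (hg : ∀ x, ρ kg x = x + (Function.extend Fin.castSucc x.2 0, 0))
    (hh : ∀ x, ρ kh x = x + (Function.extend Fin.succ x.2 0, 0))
    {γ : K4} (hγ : γ ≠ 1) {x : MM m} (hx : ρ γ x = x) : x.2 = 0 := by
  rcases K4.eq_one_or_eq_kg_or_eq_kh_or_eq_kg_mul_kh γ with rfl | rfl | rfl | rfl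
  · exact absurd rfl hγ
  · rw [hg, add_eq_left, Prod.mk_eq_zero] at hx
    funext i
    simpa [(Fin.castSucc_injective m).extend_apply] using congrFun hx.1 i.castSucc
  · rw [hh, add_eq_left, Prod.mk_eq_zero] at hx
    funext i
    simpa [(Fin.succ_injective m).extend_apply] using congrFun hx.1 i.succ
  · rw [map_mul, Module.End.mul_apply, hh, hg, add_assoc, add_eq_left, Prod.snd_add, add_zero,
      Prod.mk_add_mk, add_zero, Prod.mk_eq_zero, ← ZModModule.sub_eq_add, sub_eq_zero] at hx
    exact Fin.eq_zero_of_extend_castSucc_eq_extend_succ hx.1.symm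

noncomputable def MM.intLift (x : MM m) : BB m :=
  (fun i => (((x.2 i).cast : ℤ) : MonoidAlgebra ℤ K4), fun j => (x.1 j).cast)

theorem MM.map_intLift (φ : BB m →+ MM m) (hfa : ∀ i, φ (fa m i) = eb m i)
    (hfb : ∀ j, φ (fb m j) = ea m j) (x : MM m) : φ x.intLift = x := by
  have hlift : x.intLift = ∑ i, ((x.2 i).cast : ℤ) • fa m i + ∑ j, ((x.1 j).cast : ℤ) • fb m j := by
    refine Prod.ext (funext fun i => ?_) (funext fun j => ?_) <;>
      simp [intLift, fa, fb, Prod.fst_sum, Prod.snd_sum, Finset.sum_apply, Pi.single_apply,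
        -zsmul_eq_mul]
  have hx : x = ∑ i, x.2 i • eb m i + ∑ j, x.1 j • ea m j := by
    refine Prod.ext (funext fun j => ?_) (funext fun i => ?_) <;>
      simp [ea, eb, Prod.fst_sum, Prod.snd_sum, Finset.sum_apply, Pi.single_apply]
  rw [hlift, map_add, map_sum, map_sum]
  simp only [map_zsmul, hfa, hfb, ← Int.cast_smul_eq_zsmul (ZMod 2), ZMod.intCast_cast,
    ZMod.cast_id', id]
  exact hx.symm

theorem exists_bAct_eq_self_and_map_eq (ρ : Representation (ZMod 2) K4 (MM m))
    (hg : ∀ x, ρ kg x = x + (Function.extend Fin.castSucc x.2 0, 0))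
    (hh : ∀ x, ρ kh x = x + (Function.extend Fin.succ x.2 0, 0))
    (φ : BB m →+ MM m) (hfa : ∀ i, φ (fa m i) = eb m i) (hfb : ∀ j, φ (fb m j) = ea m j)
    (H : Subgroup K4) (x : MM m) (hx : ∀ γ ∈ H, ρ γ x = x) :
    ∃ b : BB m, (∀ γ ∈ H, bAct m γ b = b) ∧ φ b = x := by
  refine ⟨x.intLift, fun γ hγ => ?_, x.map_intLift φ hfa hfb⟩
  rcases eq_or_ne γ 1 with rfl | hγ1
  · simp [bAct, ← MonoidAlgebra.one_def]
  · simp [bAct, MM.intLift, MM.snd_eq_zero_of_apply_eq_self ρ hg hh hγ1 (hx γ hγ)]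

theorem bAct_sub (γ : K4) (b b' : BB m) : bAct m γ (b - b') = bAct m γ b - bAct m γ b' :=
  Prod.ext (funext fun _ => mul_sub _ _ _) rfl

theorem exists_bAct_coboundary_of_cocycle (H : Subgroup K4) (c : H → BB m)
    (hc : ∀ σ τ : H, c (σ * τ) = c σ + bAct m σ (c τ)) :
    ∃ b : BB m, ∀ σ : H, c σ = bAct m σ b - b := by
  have hsnd : ∀ σ, (c σ).2 = 0 :=
    eq_zero_of_map_mul_eq_add (fun σ => (c σ).2) fun σ τ => congrArg Prod.snd (hc σ τ)
  have hfst (i : Fin m) := MonoidAlgebra.exists_coboundary_of_cocycle H (fun σ => (c σ).1 i)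
    fun σ τ => congrFun (congrArg Prod.fst (hc σ τ)) i
  choose b hb using hfst
  exact ⟨(b, 0), fun σ => Prod.ext (funext fun i => hb i σ) (by simpa [bAct] using hsnd σ)⟩

end

theorem stmt_7_general (m : ℕ)
    (ρ : Representation (ZMod 2) K4 (MM m))
    (hga : ∀ j : Fin (m + 1), ρ kg (ea m j) = ea m j)
    (hha : ∀ j : Fin (m + 1), ρ kh (ea m j) = ea m j)
    (hgb : ∀ j : Fin m, ρ kg (eb m j) = ea m j.castSucc + eb m j)
    (hhb : ∀ j : Fin m, ρ kh (eb m j) = ea m j.succ + eb m j)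
    (φ : BB m →+ MM m)
    (hequiv : ∀ (γ : K4) (b : BB m), φ (bAct m γ b) = ρ γ (φ b))
    (hfa : ∀ i : Fin m, φ (fa m i) = eb m i)
    (hfb : ∀ j : Fin (m + 1), φ (fb m j) = ea m j) :
    (∀ (H : Subgroup K4) (x : MM m), (∀ γ ∈ H, ρ γ x = x) →
      ∃ b : BB m, (∀ γ ∈ H, bAct m γ b = b) ∧ φ b = x) ∧
    (∀ (H : Subgroup K4) (c : H → BB m),
      (∀ σ : H, φ (c σ) = 0) →
      (∀ σ τ : H, c (σ * τ) = c σ + bAct m (σ : K4) (c τ)) →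
      ∃ a : BB m, φ a = 0 ∧ ∀ σ : H, c σ = bAct m (σ : K4) a - a) := by
  have hg := MM.apply_eq_add_extend (ρ kg) _ (Fin.castSucc_injective m) hga hgb
  have hh := MM.apply_eq_add_extend (ρ kh) _ (Fin.succ_injective m) hha hhb
  have lift := exists_bAct_eq_self_and_map_eq ρ hg hh φ hfa hfb
  refine ⟨lift, fun H c hcφ hc => ?_⟩
  obtain ⟨b, hb⟩ := exists_bAct_coboundary_of_cocycle H c hc
  have hinv : ∀ γ ∈ H, ρ γ (φ b) = φ b := fun γ hγ => by
    rw [← hequiv, eq_add_of_sub_eq (hb ⟨γ, hγ⟩).symm, map_add, hcφ, zero_add]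
  obtain ⟨b', hb'H, hb'⟩ := lift H (φ b) hinv
  refine ⟨b - b', by rw [map_sub, hb', sub_self], fun σ => ?_⟩
  rw [hb σ, bAct_sub, hb'H σ σ.2]
  abel

/-- With `G` the Klein four group, `M = Ω^{-m} F₂`, `B = (ℤ[G])^{⊕m} ⊕ ℤ^{⊕(m+1)}` and
`φ : B → M` the `ℤ[G]`-linear map with `φ(f_i) = e_{m+1+i}` (`1 ≤ i ≤ m`) and
`φ(f_{m+i}) = e_i` (`1 ≤ i ≤ m+1`):  for every subgroup `H ≤ G` the induced map
`B^H → M^H` is surjective; consequently the kernel `A = ker φ` satisfies `H¹(H, A) = 0`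
for every subgroup `H ≤ G` (every 1-cocycle valued in `A` is a coboundary), i.e. `A` is
a coflasque `ℤ[G]`-lattice. -/
theorem stmt_7 (m : ℕ) (hm : 1 ≤ m)
    (ρ : Representation (ZMod 2) K4 (MM m))
    (hga : ∀ j : Fin (m + 1), ρ kg (ea m j) = ea m j)
    (hha : ∀ j : Fin (m + 1), ρ kh (ea m j) = ea m j)
    (hgb : ∀ j : Fin m, ρ kg (eb m j) = ea m j.castSucc + eb m j)
    (hhb : ∀ j : Fin m, ρ kh (eb m j) = ea m j.succ + eb m j)
    (φ : BB m →+ MM m)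
    (hequiv : ∀ (γ : K4) (b : BB m), φ (bAct m γ b) = ρ γ (φ b))
    (hfa : ∀ i : Fin m, φ (fa m i) = eb m i)
    (hfb : ∀ j : Fin (m + 1), φ (fb m j) = ea m j) :
    (∀ (H : Subgroup K4) (x : MM m), (∀ γ ∈ H, ρ γ x = x) →
      ∃ b : BB m, (∀ γ ∈ H, bAct m γ b = b) ∧ φ b = x) ∧
    (∀ (H : Subgroup K4) (c : H → BB m),
      (∀ σ : H, φ (c σ) = 0) →
      (∀ σ τ : H, c (σ * τ) = c σ + bAct m (σ : K4) (c τ)) →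
      ∃ a : BB m, φ a = 0 ∧ ∀ σ : H, c σ = bAct m (σ : K4) a - a) :=
  stmt_7_general m ρ hga hha hgb hhb φ hequiv hfa hfb
end

section
/- With G, M, B, φ, A, and the elements s_j as in the context: the 5m+1 elements s₁, …, s_{5m+1} form a ℤ-basis of A ≅ ℤ^{5m+1}. Moreover, a ℤ-basis of A^G is given by s_{m+1}, …, s_{2m+1} together with the elements 2s_i + s_{2m+1+i} + s_{3m+1+i} + s_{4m+1+i} for 1 ≤ i ≤ m (so A^G has rank 2m+1); a ℤ-basis of A^{H₁} is given by the above basis of A^G together with s_i + s_{2m+1+i} for 1 ≤ i ≤ m; a ℤ-basis of A^{H₂} is given by the basis of A^G together with s_i + s_{3m+1+i} for 1 ≤ i ≤ m; and a ℤ-basis of A^{H₃} is given by the basis of A^G together with s_i + s_{4m+1+i} for 1 ≤ i ≤ m (so each A^{H_a} has rank 3m+1). -/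
/-- The elements `s₁, …, s_{2m+1}`, namely `s_i = 2·f_i`; the index `Sum.inl i`
corresponds to `s_{i+1}` for `0 ≤ i ≤ m-1`, and `Sum.inr j` to `s_{m+(j+1)}`
for `0 ≤ j ≤ m`. -/
noncomputable def s1 (m : ℕ) : (Fin m ⊕ Fin (m + 1)) → BB m :=
  Sum.elim (fun i => (2 : ℤ) • fa m i) (fun j => (2 : ℤ) • fb m j)

/-- The element `s_{2m+1+(i+1)} = g·f_{i+1} − f_{i+1} − f_{m+(i+1)}` (for `0 ≤ i ≤ m-1`). -/
noncomputable def s2 (m : ℕ) (i : Fin m) : BB m :=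
  bAct m kg (fa m i) - fa m i - fb m i.castSucc

/-- The element `s_{3m+1+(i+1)} = h·f_{i+1} − f_{i+1} − f_{m+1+(i+1)}` (for `0 ≤ i ≤ m-1`). -/
noncomputable def s3 (m : ℕ) (i : Fin m) : BB m :=
  bAct m kh (fa m i) - fa m i - fb m i.succ

/-- The element `s_{4m+1+(i+1)} = (gh)·f_{i+1} − f_{i+1} − f_{m+(i+1)} − f_{m+1+(i+1)}`
(for `0 ≤ i ≤ m-1`). -/
noncomputable def s4 (m : ℕ) (i : Fin m) : BB m :=
  bAct m (kg * kh) (fa m i) - fa m i - fb m i.castSucc - fb m i.succ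

/-- The full family `s₁, …, s_{5m+1}` (indexed by a type of cardinality `5m+1`). -/
noncomputable def sAll (m : ℕ) : ((Fin m ⊕ Fin (m + 1)) ⊕ (Fin m ⊕ Fin m ⊕ Fin m)) → BB m :=
  Sum.elim (s1 m) (Sum.elim (s2 m) (Sum.elim (s3 m) (s4 m)))

/-- The claimed basis of `A^G`: `s_{m+1}, …, s_{2m+1}` together with the elements
`2s_i + s_{2m+1+i} + s_{3m+1+i} + s_{4m+1+i}` for `1 ≤ i ≤ m`. -/
noncomputable def tG (m : ℕ) : (Fin (m + 1) ⊕ Fin m) → BB m :=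
  Sum.elim (fun j => s1 m (Sum.inr j))
    (fun i => (2 : ℤ) • s1 m (Sum.inl i) + s2 m i + s3 m i + s4 m i)

/-- The claimed basis of `A^{H_a}`: the basis of `A^G` together with an extra family
`w` (namely `s_i + s_{2m+1+i}`, resp. `s_i + s_{3m+1+i}`, resp. `s_i + s_{4m+1+i}`,
for `1 ≤ i ≤ m`). -/
noncomputable def tH (m : ℕ) (w : Fin m → BB m) : ((Fin (m + 1) ⊕ Fin m) ⊕ Fin m) → BB m :=
  Sum.elim (tG m) w

/-!
Write `x_i(γ)` for the coefficient of `γ` in the `i`-th `ℤ[G]`-summand of `b ∈ B`. The vectors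
`f_i`, `f_{m+j}`, `s_{2m+1+i}`, `s_{3m+1+i}`, `s_{4m+1+i}` form a `ℤ`-basis of `B`; its dual
coordinates are the augmentation `∑_γ x_i(γ)`, a corrected trivial coordinate, and `x_i(g)`,
`x_i(h)`, `x_i(gh)`. Since `φ` kills the last three families and sends `f_i`, `f_{m+j}` to
distinct basis vectors of `M`, an element lies in `A` exactly when its first two kinds of
coordinates are even, so the `s_j`, being that basis rescaled by `(2, 2, 1, 1, 1)`, form a basis
of `A`. An element of `A` is fixed by `δ` exactly when `x_i(δγ) = x_i(γ)` for all `i, γ`; these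
relations write it as an integral combination of the proposed generators, which are themselves
fixed because the norm element and `1 + δ` are. Their linear independence is inherited from
that of the `s_j`.
-/

open Module

theorem Representation.apply_eq_of_mem_zpowers {G R V : Type*} [Group G] [CommSemiring R]
    [AddCommMonoid V] [Module R V] (ρ : Representation R G V) {δ γ : G} {v : V}
    (hv : ρ δ v = v) (hγ : γ ∈ Subgroup.zpowers δ) : ρ γ v = v := by
  let stabilizer : Subgroup G :=
    { carrier := {γ | ρ γ v = v}
      mul_mem' := fun {a b} ha hb => by
        simp only [Set.mem_ofPred_eq, map_mul, Module.End.mul_apply] at ha hb ⊢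
        rw [hb, ha]
      one_mem' := by simp
      inv_mem' := fun {a} ha => by
        simp only [Set.mem_ofPred_eq] at ha ⊢
        conv_lhs => rw [← ha, ← Module.End.mul_apply, ← map_mul, inv_mul_cancel, map_one]
        rfl }
  exact Subgroup.zpowers_le.mpr (show δ ∈ stabilizer from hv) hγ

namespace Module.DualBases

variable {R M ι : Type*} [CommRing R] [AddCommGroup M] [Module R M] [Fintype ι] {e : ι → M}
  {ε : ι → Dual R M}

theorem sum_smul_eq (h : DualBases e ε) (x : M) : ∑ i, ε i x • e i = x := by
  simpa using h.basis.sum_repr x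

theorem apply_sum_smul (h : DualBases e ε) (c : ι → R) (i : ι) : ε i (∑ j, c j • e j) = c i := by
  rw [map_sum, Finset.sum_eq_single i]
  · simp [h.eval_same]
  · intro j _ hj
    simp [h.eval_of_ne (Ne.symm hj)]
  · simp

theorem linearIndependent_smul [IsDomain R] (h : DualBases e ε) {d : ι → R} (hd : ∀ i, d i ≠ 0) :
    LinearIndependent R fun i => d i • e i := by
  rw [Fintype.linearIndependent_iff]
  intro c hc i
  have := h.apply_sum_smul (fun j => c j * d j) i
  simp only [mul_smul, hc, map_zero] at this
  exact (mul_eq_zero.mp this.symm).resolve_right (hd i)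

theorem mem_span_smul_iff (h : DualBases e ε) (d : ι → R) {x : M} :
    x ∈ Submodule.span R (Set.range fun i => d i • e i) ↔ ∀ i, d i ∣ ε i x := by
  constructor
  · intro hx i
    induction hx using Submodule.span_induction with
    | mem y hy =>
      obtain ⟨j, rfl⟩ := hy
      rcases eq_or_ne i j with rfl | hij
      · simp [h.eval_same]
      · simp [h.eval_of_ne hij]
    | zero => simp
    | add y z _ _ hy hz => rw [map_add]; exact dvd_add hy hz
    | smul a y _ hy => rw [map_smul, smul_eq_mul]; exact hy.mul_left a
  · intro hx
    choose c hc using hx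
    rw [← h.sum_smul_eq x]
    refine Submodule.sum_mem _ fun i _ => ?_
    rw [hc, mul_comm, mul_smul]
    exact Submodule.smul_mem _ _ (Submodule.subset_span ⟨i, rfl⟩)

end Module.DualBases

theorem LinearIndependent.sum_elim_norm_add {R M ι κ : Type*} [CommRing R] [AddCommGroup M]
    [Module R M] [Fintype ι] [Fintype κ] {e₀ : κ → M} {e₁ e₂ e₃ e₄ : ι → M}
    (h : LinearIndependent R (Sum.elim (Sum.elim e₁ e₀) (Sum.elim e₂ (Sum.elim e₃ e₄)))) :
    LinearIndependent R (Sum.elim (Sum.elim e₀ fun i => (2 : R) • e₁ i + e₂ i + e₃ i + e₄ i)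
      fun i => e₁ i + e₂ i) := by
  rw [Fintype.linearIndependent_iff] at h ⊢
  intro c hc
  have key := h (Sum.elim (Sum.elim (fun i => c (.inl (.inr i)) * 2 + c (.inr i))
      fun j => c (.inl (.inl j)))
    (Sum.elim (fun i => c (.inl (.inr i)) + c (.inr i))
      (Sum.elim (fun i => c (.inl (.inr i))) fun i => c (.inl (.inr i))))) (by
      simp only [Fintype.sum_sum_type, Sum.elim_inl, Sum.elim_inr] at hc ⊢
      rw [← hc]
      simp only [add_smul, smul_add, smul_smul, Finset.sum_add_distrib]
      abel)
  have ha (i : ι) : c (.inl (.inr i)) = 0 := key (.inr (.inr (.inl i)))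
  have hb (i : ι) : c (.inr i) = 0 := by simpa [ha] using key (.inr (.inl i))
  rintro ((j | i) | i)
  exacts [key (.inl (.inr j)), ha i, hb i]

@[simp] lemma kg_ne_one : kg ≠ 1 := by decide
@[simp] lemma kh_ne_one : kh ≠ 1 := by decide
@[simp] lemma kg_mul_kh_ne_one : kg * kh ≠ 1 := by decide
@[simp] lemma kg_ne_kh : kg ≠ kh := by decide
@[simp] lemma kh_ne_kg : kh ≠ kg := by decide

lemma K4.cases (γ : K4) : γ = 1 ∨ γ = kg ∨ γ = kh ∨ γ = kg * kh := by revert γ; decide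

lemma K4.mul_self (γ : K4) : γ * γ = 1 := by revert γ; decide

lemma K4.sum_univ {M : Type*} [AddCommMonoid M] (f : K4 → M) :
    ∑ γ, f γ = f 1 + f kg + f kh + f (kg * kh) := by
  rw [show (Finset.univ : Finset K4) = {1, kg, kh, kg * kh} by decide]
  rw [Finset.sum_insert (by decide), Finset.sum_insert (by decide), Finset.sum_insert (by decide),
    Finset.sum_singleton, add_assoc, add_assoc]

section
variable {m : ℕ}

lemma bAct_one (b : BB m) : bAct m 1 b = b :=
  Prod.ext (funext fun _ => by simp only [bAct, map_one, one_mul]) rfl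

lemma bAct_mul (γ δ : K4) (b : BB m) : bAct m (γ * δ) b = bAct m γ (bAct m δ b) :=
  Prod.ext (funext fun _ => by simp only [bAct, map_mul, mul_assoc]) rfl

variable (m) in
noncomputable def bRep : Representation ℤ K4 (BB m) where
  toFun γ :=
    { toFun := bAct m γ
      map_add' := fun _ _ => Prod.ext (funext fun _ => mul_add _ _ _) rfl
      map_smul' := fun _ _ => Prod.ext (funext fun _ => mul_smul_comm _ _ _) rfl }
  map_one' := LinearMap.ext bAct_one
  map_mul' γ δ := LinearMap.ext (bAct_mul γ δ)

lemma bRep_apply (γ : K4) (b : BB m) : bRep m γ b = bAct m γ b := rfl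

lemma bAct_fb (γ : K4) (j : Fin (m + 1)) : bAct m γ (fb m j) = fb m j :=
  Prod.ext (funext fun _ => mul_zero _) rfl

lemma bAct_add_bAct_self_sub (δ : K4) (x : BB m) {c : BB m} (hc : bAct m δ c = c) :
    bAct m δ (x + bAct m δ x - c) = x + bAct m δ x - c := by
  rw [← bRep_apply, map_sub, map_add, bRep_apply, bRep_apply, bRep_apply, ← bAct_mul, K4.mul_self,
    bAct_one, hc, add_comm (bAct m δ x)]

variable (m) in
noncomputable def freeCoeff (i : Fin m) (γ : K4) : BB m →ₗ[ℤ] ℤ :=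
  (Finsupp.lapply γ).comp ((MonoidAlgebra.coeffLinearEquiv ℤ).toLinearMap.comp
    ((LinearMap.proj (φ := fun _ : Fin m => MonoidAlgebra ℤ K4) i).comp (LinearMap.fst ℤ _ _)))

variable (m) in
noncomputable def trivCoeff (j : Fin (m + 1)) : BB m →ₗ[ℤ] ℤ :=
  (LinearMap.proj j).comp (LinearMap.snd ℤ _ _)

lemma freeCoeff_apply (i : Fin m) (γ : K4) (b : BB m) : freeCoeff m i γ b = (b.1 i).coeff γ :=
  rfl

@[simp] lemma freeCoeff_bAct_fa (i i' : Fin m) (γ δ : K4) :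
    freeCoeff m i γ (bAct m δ (fa m i')) = if i = i' then if γ = δ then 1 else 0 else 0 := by
  rw [freeCoeff_apply]
  by_cases h : i = i' <;>
    simp [h, bAct, fa, MonoidAlgebra.of_apply, MonoidAlgebra.coeff_single, Finsupp.single_apply,
      eq_comm]

@[simp] lemma freeCoeff_fa (i i' : Fin m) (γ : K4) :
    freeCoeff m i γ (fa m i') = if i = i' then if γ = 1 then 1 else 0 else 0 := by
  rw [← freeCoeff_bAct_fa i i' γ 1, bAct_one]

@[simp] lemma freeCoeff_fb (i : Fin m) (γ : K4) (j : Fin (m + 1)) :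
    freeCoeff m i γ (fb m j) = 0 := by
  simp [freeCoeff_apply, fb]

@[simp] lemma trivCoeff_bAct_fa (j : Fin (m + 1)) (δ : K4) (i : Fin m) :
    trivCoeff m j (bAct m δ (fa m i)) = 0 := rfl

@[simp] lemma trivCoeff_fa (j : Fin (m + 1)) (i : Fin m) : trivCoeff m j (fa m i) = 0 := rfl

@[simp] lemma trivCoeff_fb (j j' : Fin (m + 1)) :
    trivCoeff m j (fb m j') = if j = j' then 1 else 0 := by
  simp [trivCoeff, fb, Pi.single_apply]

lemma freeCoeff_mul_of_fixed {δ : K4} {b : BB m} (hb : bAct m δ b = b) (i : Fin m) (γ : K4) :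
    freeCoeff m i (δ * γ) b = freeCoeff m i γ b := by
  conv_lhs => rw [← hb]
  simp [freeCoeff_apply, bAct, MonoidAlgebra.of_apply]

lemma BB.eq_zero_of_coeff {b : BB m} (hx : ∀ i γ, freeCoeff m i γ b = 0)
    (hy : ∀ j, trivCoeff m j b = 0) : b = 0 :=
  Prod.ext (funext fun i => MonoidAlgebra.coeff_injective (Finsupp.ext (hx i))) (funext hy)

variable (m)

abbrev SIndex : Type := (Fin m ⊕ Fin (m + 1)) ⊕ (Fin m ⊕ Fin m ⊕ Fin m)

noncomputable def adaptedBasis : SIndex m → BB m :=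
  Sum.elim (Sum.elim (fa m) (fb m)) (Sum.elim (s2 m) (Sum.elim (s3 m) (s4 m)))

noncomputable def augCoord (i : Fin m) : Dual ℤ (BB m) := ∑ γ, freeCoeff m i γ

/-- The coordinate of `f_{m+j}`: the trivial coordinate, corrected so that it vanishes on the
`s_{2m+1+i}`, `s_{3m+1+i}`, `s_{4m+1+i}`, which involve `f_{m+i}` and `f_{m+1+i}`. -/
noncomputable def trivCoord (j : Fin (m + 1)) : Dual ℤ (BB m) :=
  trivCoeff m j + ∑ i, ((if j = i.castSucc then 1 else 0 : ℤ) •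
      (freeCoeff m i kg + freeCoeff m i (kg * kh)) +
    (if j = i.succ then 1 else 0 : ℤ) • (freeCoeff m i kh + freeCoeff m i (kg * kh)))

noncomputable def adaptedCoord : SIndex m → Dual ℤ (BB m) :=
  Sum.elim (Sum.elim (augCoord m) (trivCoord m))
    (Sum.elim (fun i => freeCoeff m i kg)
      (Sum.elim (fun i => freeCoeff m i kh) fun i => freeCoeff m i (kg * kh)))

def adaptedScale : SIndex m → ℤ := Sum.elim (fun _ => 2) fun _ => 1

noncomputable def freePart (b : BB m) (i : Fin m) : BB m :=
  augCoord m i b • fa m i + freeCoeff m i kg b • s2 m i + freeCoeff m i kh b • s3 m i +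
    freeCoeff m i (kg * kh) b • s4 m i

variable {m}

local notation "A" => Submodule.span ℤ (Set.range (sAll m))

lemma augCoord_apply (i : Fin m) (b : BB m) : augCoord m i b =
    freeCoeff m i 1 b + freeCoeff m i kg b + freeCoeff m i kh b + freeCoeff m i (kg * kh) b := by
  simp [augCoord, K4.sum_univ]

lemma trivCoord_apply (j : Fin (m + 1)) (b : BB m) : trivCoord m j b = trivCoeff m j b + ∑ i,
    ((if j = i.castSucc then 1 else 0) * (freeCoeff m i kg b + freeCoeff m i (kg * kh) b) +
      (if j = i.succ then 1 else 0) * (freeCoeff m i kh b + freeCoeff m i (kg * kh) b)) := by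
  simp only [trivCoord, LinearMap.add_apply, LinearMap.sum_apply, LinearMap.smul_apply,
    smul_eq_mul]

lemma adaptedDualBases : DualBases (adaptedBasis m) (adaptedCoord m) where
  eval_same := by
    rintro ((i | j) | (i | i | i)) <;>
      simp [adaptedBasis, adaptedCoord, augCoord, trivCoord_apply, s2, s3, s4]
  eval_of_ne := by
    rintro ((i | j) | (i | i | i)) ((i' | j') | (i' | i' | i')) hne <;>
      simp_all [adaptedBasis, adaptedCoord, augCoord, trivCoord_apply, s2, s3, s4,
        Finset.sum_add_distrib]
  total {b₁ b₂} h := by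
    rw [← sub_eq_zero]
    have hε (k : SIndex m) : adaptedCoord m k (b₁ - b₂) = 0 := by rw [map_sub, h, sub_self]
    have hx (i : Fin m) (γ : K4) : freeCoeff m i γ (b₁ - b₂) = 0 := by
      have haug := hε (.inl (.inl i))
      have hg := hε (.inr (.inl i))
      have hh := hε (.inr (.inr (.inl i)))
      have hgh := hε (.inr (.inr (.inr i)))
      simp only [adaptedCoord, Sum.elim_inl, Sum.elim_inr, augCoord_apply] at haug hg hh hgh
      rcases K4.cases γ with rfl | rfl | rfl | rfl <;> linarith
    refine BB.eq_zero_of_coeff hx fun j => ?_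
    simpa [adaptedCoord, trivCoord_apply, hx] using hε (.inl (.inr j))

lemma sAll_eq_smul : sAll m = fun k => adaptedScale m k • adaptedBasis m k := by
  funext k
  rcases k with (_ | _) | (_ | _ | _) <;> simp [sAll, s1, adaptedScale, adaptedBasis]

lemma sAll_linearIndependent : LinearIndependent ℤ (sAll m) := by
  rw [sAll_eq_smul]
  exact adaptedDualBases.linearIndependent_smul (by rintro (_ | _) <;> simp [adaptedScale])

lemma mem_span_sAll_iff {b : BB m} :
    b ∈ A ↔ (∀ i, 2 ∣ augCoord m i b) ∧ ∀ j, 2 ∣ trivCoord m j b := by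
  rw [sAll_eq_smul, adaptedDualBases.mem_span_smul_iff]
  simp [Sum.forall, adaptedScale, adaptedCoord]

lemma sAll_mem_span (k : SIndex m) : sAll m k ∈ A := Submodule.subset_span ⟨k, rfl⟩

lemma mem_of_mem_span_sAll {S : Submodule ℤ (BB m)} {b : BB m} (hb : b ∈ A)
    (hS : ∀ j, s1 m (.inr j) ∈ S) (hi : ∀ i, freePart m b i ∈ S) : b ∈ S := by
  obtain ⟨-, hv⟩ := mem_span_sAll_iff.mp hb
  choose v hv using hv
  have hb_eq : b = ∑ i, freePart m b i + ∑ j, v j • s1 m (.inr j) := by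
    conv_lhs => rw [← adaptedDualBases.sum_smul_eq b]
    simp only [Fintype.sum_sum_type, adaptedBasis, adaptedCoord, Sum.elim_inl, Sum.elim_inr,
      freePart, Finset.sum_add_distrib, hv, s1, mul_comm (2 : ℤ), mul_smul]
    abel
  rw [hb_eq]
  exact add_mem (sum_mem fun i _ => hi i) (sum_mem fun j _ => Submodule.smul_mem _ _ (hS j))

lemma sum_smul_eb_add_sum_smul_ea_eq_zero_iff (u : Fin m → ℤ) (v : Fin (m + 1) → ℤ) :
    ∑ i, u i • eb m i + ∑ j, v j • ea m j = 0 ↔ (∀ i, 2 ∣ u i) ∧ ∀ j, 2 ∣ v j := by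
  have : ∑ i, u i • eb m i + ∑ j, v j • ea m j =
      (fun j => (v j : ZMod 2), fun i => (u i : ZMod 2)) := by
    ext k <;> simp [ea, eb, Prod.fst_sum, Prod.snd_sum, Finset.sum_apply, Pi.single_apply]
  rw [this, Prod.mk_eq_zero, funext_iff, funext_iff, and_comm]
  simp only [Pi.zero_apply, ZMod.intCast_zmod_eq_zero_iff_dvd, Nat.cast_ofNat]

lemma map_eq_zero_iff_mem_span_sAll {ρ : Representation (ZMod 2) K4 (MM m)} {φ : BB m →+ MM m}
    (hga : ∀ j : Fin (m + 1), ρ kg (ea m j) = ea m j)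
    (hgb : ∀ j : Fin m, ρ kg (eb m j) = ea m j.castSucc + eb m j)
    (hhb : ∀ j : Fin m, ρ kh (eb m j) = ea m j.succ + eb m j)
    (hequiv : ∀ (γ : K4) (b : BB m), φ (bAct m γ b) = ρ γ (φ b))
    (hfa : ∀ i : Fin m, φ (fa m i) = eb m i) (hfb : ∀ j : Fin (m + 1), φ (fb m j) = ea m j)
    (b : BB m) : φ b = 0 ↔ b ∈ A := by
  have h2 (i : Fin m) : φ (s2 m i) = 0 := by
    rw [s2, map_sub, map_sub, hequiv, hfa, hfb, hgb]
    abel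
  have h3 (i : Fin m) : φ (s3 m i) = 0 := by
    rw [s3, map_sub, map_sub, hequiv, hfa, hfb, hhb]
    abel
  have h4 (i : Fin m) : φ (s4 m i) = 0 := by
    rw [s4, map_sub, map_sub, map_sub, hequiv, hfa, hfb, hfb, map_mul, Module.End.mul_apply,
      hhb, map_add, hga, hgb]
    abel
  have hφ : φ b = ∑ i, augCoord m i b • eb m i + ∑ j, trivCoord m j b • ea m j := by
    conv_lhs => rw [← adaptedDualBases.sum_smul_eq b]
    simp only [Fintype.sum_sum_type, adaptedBasis, adaptedCoord, Sum.elim_inl, Sum.elim_inr,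
      map_add, map_sum, map_zsmul, h2, h3, h4, hfa, hfb, smul_zero, Finset.sum_const_zero,
      add_zero]
  rw [hφ, sum_smul_eb_add_sum_smul_ea_eq_zero_iff, mem_span_sAll_iff]

lemma bAct_eq_of_mem_span {ι : Type*} {t : ι → BB m} {γ : K4} (ht : ∀ k, bAct m γ (t k) = t k)
    {b : BB m} (hb : b ∈ Submodule.span ℤ (Set.range t)) : bAct m γ b = b :=
  (Submodule.span_le (p := LinearMap.eqLocus (bRep m γ) LinearMap.id)).mpr
    (Set.range_subset_iff.mpr ht) hb

lemma tG_inr_eq (i : Fin m) : tG m (.inr i) =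
    ∑ γ, bAct m γ (fa m i) - (2 : ℤ) • fb m i.castSucc - (2 : ℤ) • fb m i.succ := by
  simp only [tG, Sum.elim_inr, s1, Sum.elim_inl, s2, s3, s4, K4.sum_univ, bAct_one]
  module

lemma bAct_tG (γ : K4) (k : Fin (m + 1) ⊕ Fin m) : bAct m γ (tG m k) = tG m k := by
  simp only [← bRep_apply]
  rcases k with j | i
  · simp only [tG, Sum.elim_inl, s1, Sum.elim_inr, map_zsmul, bRep_apply, bAct_fb]
  · rw [tG_inr_eq, map_sub, map_sub, map_zsmul, map_zsmul, map_sum]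
    simp only [bRep_apply, bAct_fb, ← bAct_mul]
    congr 2
    exact Equiv.sum_comp (Equiv.mulLeft γ) fun δ => bAct m δ (fa m i)

lemma tG_mem_span_sAll (k : Fin (m + 1) ⊕ Fin m) : tG m k ∈ A := by
  rcases k with j | i
  · exact sAll_mem_span (.inl (.inr j))
  · exact add_mem (add_mem (add_mem (Submodule.smul_mem _ _ (sAll_mem_span (.inl (.inl i))))
      (sAll_mem_span (.inr (.inl i)))) (sAll_mem_span (.inr (.inr (.inl i)))))
      (sAll_mem_span (.inr (.inr (.inr i))))

lemma mem_span_tG_of_fixed {b : BB m} (hb : b ∈ A) (hg : bAct m kg b = b)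
    (hh : bAct m kh b = b) : b ∈ Submodule.span ℤ (Set.range (tG m)) := by
  refine mem_of_mem_span_sAll hb (fun j => Submodule.subset_span ⟨.inl j, rfl⟩) fun i => ?_
  have h1 : freeCoeff m i 1 b = freeCoeff m i kg b := by
    simpa [K4.mul_self] using freeCoeff_mul_of_fixed hg i kg
  have hh' : freeCoeff m i kh b = freeCoeff m i (kg * kh) b :=
    (freeCoeff_mul_of_fixed hg i kh).symm
  have hgh : freeCoeff m i (kg * kh) b = freeCoeff m i kg b := by
    simpa [mul_comm] using freeCoeff_mul_of_fixed hh i kg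
  convert Submodule.smul_mem _ (freeCoeff m i kg b)
    (Submodule.subset_span (Set.mem_range_self (f := tG m) (.inr i))) using 1
  rw [freePart, augCoord_apply, h1, hh', hgh]
  simp only [tG, Sum.elim_inr, s1, Sum.elim_inl]
  module

lemma coe_span_tG : (Submodule.span ℤ (Set.range (tG m)) : Set (BB m)) =
    {b | b ∈ A ∧ ∀ γ, bAct m γ b = b} := by
  ext b
  constructor
  · intro hb
    exact ⟨Submodule.span_le.mpr (Set.range_subset_iff.mpr tG_mem_span_sAll) hb,
      fun γ => bAct_eq_of_mem_span (bAct_tG γ) hb⟩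
  · rintro ⟨hA, hfix⟩
    exact mem_span_tG_of_fixed hA (hfix kg) (hfix kh)

lemma coe_span_tH {δ : K4} {w : Fin m → BB m} (hwA : ∀ i, w i ∈ A)
    (hw : ∀ i, bAct m δ (w i) = w i)
    (hspan : ∀ b ∈ A, bAct m δ b = b → b ∈ Submodule.span ℤ (Set.range (tH m w))) :
    (Submodule.span ℤ (Set.range (tH m w)) : Set (BB m)) =
      {b | b ∈ A ∧ ∀ γ ∈ Subgroup.zpowers δ, bAct m γ b = b} := by
  ext b
  constructor
  · intro hb
    refine ⟨Submodule.span_le.mpr (Set.range_subset_iff.mpr ?_) hb,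
      fun γ hγ => (bRep m).apply_eq_of_mem_zpowers (bAct_eq_of_mem_span ?_ hb) hγ⟩
    · rintro (k | i)
      exacts [tG_mem_span_sAll k, hwA i]
    · rintro (k | i)
      exacts [bAct_tG δ k, hw i]
  · rintro ⟨hA, hfix⟩
    exact hspan b hA (hfix δ (Subgroup.mem_zpowers δ))

lemma mem_span_tH_of_freePart_eq {w : Fin m → BB m} {b : BB m} (hb : b ∈ A) (c d : Fin m → ℤ)
    (h : ∀ i, freePart m b i = c i • tG m (.inr i) + d i • w i) :
    b ∈ Submodule.span ℤ (Set.range (tH m w)) := by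
  refine mem_of_mem_span_sAll hb (fun j => Submodule.subset_span ⟨.inl (.inl j), rfl⟩) fun i => ?_
  rw [h]
  exact add_mem (Submodule.smul_mem _ _ (Submodule.subset_span ⟨.inl (.inr i), rfl⟩))
    (Submodule.smul_mem _ _ (Submodule.subset_span ⟨.inr i, rfl⟩))

lemma coe_span_tH_s2 : (Submodule.span ℤ (Set.range (tH m fun i => s1 m (.inl i) + s2 m i)) :
    Set (BB m)) = {b | b ∈ A ∧ ∀ γ ∈ Subgroup.zpowers kg, bAct m γ b = b} := by
  refine coe_span_tH (fun i => add_mem (sAll_mem_span (.inl (.inl i)))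
    (sAll_mem_span (.inr (.inl i)))) (fun i => ?_) fun b hb hg => ?_
  · have : s1 m (.inl i) + s2 m i = fa m i + bAct m kg (fa m i) - fb m i.castSucc := by
      simp only [s1, Sum.elim_inl, s2]; module
    rw [this, bAct_add_bAct_self_sub _ _ (bAct_fb _ _)]
  · refine mem_span_tH_of_freePart_eq hb (fun i => freeCoeff m i kh b)
      (fun i => freeCoeff m i kg b - freeCoeff m i kh b) fun i => ?_
    have h1 : freeCoeff m i 1 b = freeCoeff m i kg b := by
      simpa [K4.mul_self] using freeCoeff_mul_of_fixed hg i kg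
    have hgh : freeCoeff m i (kg * kh) b = freeCoeff m i kh b := freeCoeff_mul_of_fixed hg i kh
    rw [freePart, augCoord_apply, h1, hgh]
    simp only [tG, Sum.elim_inr, s1, Sum.elim_inl]
    module

lemma coe_span_tH_s3 : (Submodule.span ℤ (Set.range (tH m fun i => s1 m (.inl i) + s3 m i)) :
    Set (BB m)) = {b | b ∈ A ∧ ∀ γ ∈ Subgroup.zpowers kh, bAct m γ b = b} := by
  refine coe_span_tH (fun i => add_mem (sAll_mem_span (.inl (.inl i)))
    (sAll_mem_span (.inr (.inr (.inl i))))) (fun i => ?_) fun b hb hh => ?_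
  · have : s1 m (.inl i) + s3 m i = fa m i + bAct m kh (fa m i) - fb m i.succ := by
      simp only [s1, Sum.elim_inl, s3]; module
    rw [this, bAct_add_bAct_self_sub _ _ (bAct_fb _ _)]
  · refine mem_span_tH_of_freePart_eq hb (fun i => freeCoeff m i kg b)
      (fun i => freeCoeff m i kh b - freeCoeff m i kg b) fun i => ?_
    have h1 : freeCoeff m i 1 b = freeCoeff m i kh b := by
      simpa [K4.mul_self] using freeCoeff_mul_of_fixed hh i kh
    have hgh : freeCoeff m i (kg * kh) b = freeCoeff m i kg b := by
      simpa [mul_comm] using freeCoeff_mul_of_fixed hh i kg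
    rw [freePart, augCoord_apply, h1, hgh]
    simp only [tG, Sum.elim_inr, s1, Sum.elim_inl]
    module

lemma coe_span_tH_s4 : (Submodule.span ℤ (Set.range (tH m fun i => s1 m (.inl i) + s4 m i)) :
    Set (BB m)) = {b | b ∈ A ∧ ∀ γ ∈ Subgroup.zpowers (kg * kh), bAct m γ b = b} := by
  refine coe_span_tH (fun i => add_mem (sAll_mem_span (.inl (.inl i)))
    (sAll_mem_span (.inr (.inr (.inr i))))) (fun i => ?_) fun b hb hgh => ?_
  · have : s1 m (.inl i) + s4 m i =
        fa m i + bAct m (kg * kh) (fa m i) - (fb m i.castSucc + fb m i.succ) := by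
      simp only [s1, Sum.elim_inl, s4]; module
    rw [this, bAct_add_bAct_self_sub]
    rw [← bRep_apply, map_add, bRep_apply, bRep_apply, bAct_fb, bAct_fb]
  · refine mem_span_tH_of_freePart_eq hb (fun i => freeCoeff m i kg b)
      (fun i => freeCoeff m i (kg * kh) b - freeCoeff m i kg b) fun i => ?_
    have h1 : freeCoeff m i 1 b = freeCoeff m i (kg * kh) b := by
      simpa [K4.mul_self] using freeCoeff_mul_of_fixed hgh i (kg * kh)
    have hh : freeCoeff m i kh b = freeCoeff m i kg b := by
      simpa [show kg * kh * kg = kh by decide] using freeCoeff_mul_of_fixed hgh i kg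
    rw [freePart, augCoord_apply, h1, hh]
    simp only [tG, Sum.elim_inr, s1, Sum.elim_inl]
    module

lemma sAll_eq_sum_elim :
    sAll m = Sum.elim (Sum.elim (fun i => s1 m (.inl i)) fun j => s1 m (.inr j))
      (Sum.elim (s2 m) (Sum.elim (s3 m) (s4 m))) := by
  funext k
  rcases k with (_ | _) | _ <;> rfl

lemma tH_s2_linearIndependent : LinearIndependent ℤ (tH m fun i => s1 m (.inl i) + s2 m i) :=
  (sAll_eq_sum_elim ▸ sAll_linearIndependent).sum_elim_norm_add

lemma tG_linearIndependent : LinearIndependent ℤ (tG m) :=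
  tH_s2_linearIndependent.comp Sum.inl Sum.inl_injective

lemma tH_s3_linearIndependent : LinearIndependent ℤ (tH m fun i => s1 m (.inl i) + s3 m i) := by
  have h : LinearIndependent ℤ (Sum.elim (Sum.elim (fun i => s1 m (.inl i)) fun j => s1 m (.inr j))
      (Sum.elim (s3 m) (Sum.elim (s2 m) (s4 m)))) := by
    convert (linearIndependent_equiv (Equiv.sumCongr (Equiv.refl _)
      ((Equiv.sumAssoc _ _ _).symm.trans (((Equiv.sumComm _ _).sumCongr (Equiv.refl _)).trans
        (Equiv.sumAssoc _ _ _))))).mpr (sAll_eq_sum_elim ▸ sAll_linearIndependent) using 1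
    funext k
    rcases k with (_ | _) | (_ | _ | _) <;> rfl
  have h' := h.sum_elim_norm_add
  simp only [add_right_comm _ (s3 m _) (s2 m _)] at h'
  exact h'

lemma tH_s4_linearIndependent : LinearIndependent ℤ (tH m fun i => s1 m (.inl i) + s4 m i) := by
  have h : LinearIndependent ℤ (Sum.elim (Sum.elim (fun i => s1 m (.inl i)) fun j => s1 m (.inr j))
      (Sum.elim (s4 m) (Sum.elim (s2 m) (s3 m)))) := by
    convert (linearIndependent_equiv (Equiv.sumCongr (Equiv.refl _)
      ((Equiv.sumComm _ _).trans (Equiv.sumAssoc _ _ _)))).mpr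
        (sAll_eq_sum_elim ▸ sAll_linearIndependent) using 1
    funext k
    rcases k with (_ | _) | (_ | _ | _) <;> rfl
  have h' := h.sum_elim_norm_add
  simp only [add_right_comm _ (s4 m _)] at h'
  exact h'

end

theorem stmt_8_general (m : ℕ)
    (ρ : Representation (ZMod 2) K4 (MM m))
    (hga : ∀ j : Fin (m + 1), ρ kg (ea m j) = ea m j)
    (hgb : ∀ j : Fin m, ρ kg (eb m j) = ea m j.castSucc + eb m j)
    (hhb : ∀ j : Fin m, ρ kh (eb m j) = ea m j.succ + eb m j)
    (φ : BB m →+ MM m)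
    (hequiv : ∀ (γ : K4) (b : BB m), φ (bAct m γ b) = ρ γ (φ b))
    (hfa : ∀ i : Fin m, φ (fa m i) = eb m i)
    (hfb : ∀ j : Fin (m + 1), φ (fb m j) = ea m j) :
    (LinearIndependent ℤ (sAll m) ∧
      Submodule.span ℤ (Set.range (sAll m)) = LinearMap.ker φ.toIntLinearMap) ∧
    (LinearIndependent ℤ (tG m) ∧
      (↑(Submodule.span ℤ (Set.range (tG m))) : Set (BB m))
        = {b : BB m | φ b = 0 ∧ ∀ γ : K4, bAct m γ b = b}) ∧
    (LinearIndependent ℤ (tH m (fun i => s1 m (Sum.inl i) + s2 m i)) ∧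
      (↑(Submodule.span ℤ (Set.range (tH m (fun i => s1 m (Sum.inl i) + s2 m i)))) : Set (BB m))
        = {b : BB m | φ b = 0 ∧ ∀ γ ∈ Subgroup.zpowers kg, bAct m γ b = b}) ∧
    (LinearIndependent ℤ (tH m (fun i => s1 m (Sum.inl i) + s3 m i)) ∧
      (↑(Submodule.span ℤ (Set.range (tH m (fun i => s1 m (Sum.inl i) + s3 m i)))) : Set (BB m))
        = {b : BB m | φ b = 0 ∧ ∀ γ ∈ Subgroup.zpowers kh, bAct m γ b = b}) ∧
    (LinearIndependent ℤ (tH m (fun i => s1 m (Sum.inl i) + s4 m i)) ∧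
      (↑(Submodule.span ℤ (Set.range (tH m (fun i => s1 m (Sum.inl i) + s4 m i)))) : Set (BB m))
        = {b : BB m | φ b = 0 ∧ ∀ γ ∈ Subgroup.zpowers (kg * kh), bAct m γ b = b}) := by
  have hA (b : BB m) : φ b = 0 ↔ b ∈ Submodule.span ℤ (Set.range (sAll m)) :=
    map_eq_zero_iff_mem_span_sAll hga hgb hhb hequiv hfa hfb b
  simp only [hA]
  exact ⟨⟨sAll_linearIndependent, Submodule.ext fun b => (hA b).symm⟩,
    ⟨tG_linearIndependent, coe_span_tG⟩, ⟨tH_s2_linearIndependent, coe_span_tH_s2⟩,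
    ⟨tH_s3_linearIndependent, coe_span_tH_s3⟩, ⟨tH_s4_linearIndependent, coe_span_tH_s4⟩⟩

/-- With `G` the Klein four group, `M = Ω^{-m}F₂`, `B = (ℤ[G])^{⊕m} ⊕ ℤ^{⊕(m+1)}`,
`φ : B → M` as specified and `A = ker φ`: the `5m+1` elements `s_j` form a ℤ-basis of
`A ≅ ℤ^{5m+1}`; the elements `s_{m+1}, …, s_{2m+1}` together with
`2s_i + s_{2m+1+i} + s_{3m+1+i} + s_{4m+1+i}` (`1 ≤ i ≤ m`) form a ℤ-basis of `A^G`
(which therefore has rank `2m+1`); and adjoining the elements `s_i + s_{2m+1+i}`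
(resp. `s_i + s_{3m+1+i}`, resp. `s_i + s_{4m+1+i}`) for `1 ≤ i ≤ m` yields a ℤ-basis
of `A^{H₁}` (resp. `A^{H₂}`, resp. `A^{H₃}`), each of rank `3m+1`. -/
theorem stmt_8 (m : ℕ) (hm : 1 ≤ m)
    (ρ : Representation (ZMod 2) K4 (MM m))
    (hga : ∀ j : Fin (m + 1), ρ kg (ea m j) = ea m j)
    (hha : ∀ j : Fin (m + 1), ρ kh (ea m j) = ea m j)
    (hgb : ∀ j : Fin m, ρ kg (eb m j) = ea m j.castSucc + eb m j)
    (hhb : ∀ j : Fin m, ρ kh (eb m j) = ea m j.succ + eb m j)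
    (φ : BB m →+ MM m)
    (hequiv : ∀ (γ : K4) (b : BB m), φ (bAct m γ b) = ρ γ (φ b))
    (hfa : ∀ i : Fin m, φ (fa m i) = eb m i)
    (hfb : ∀ j : Fin (m + 1), φ (fb m j) = ea m j) :
    (LinearIndependent ℤ (sAll m) ∧
      Submodule.span ℤ (Set.range (sAll m)) = LinearMap.ker φ.toIntLinearMap) ∧
    (LinearIndependent ℤ (tG m) ∧
      (↑(Submodule.span ℤ (Set.range (tG m))) : Set (BB m))
        = {b : BB m | φ b = 0 ∧ ∀ γ : K4, bAct m γ b = b}) ∧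
    (LinearIndependent ℤ (tH m (fun i => s1 m (Sum.inl i) + s2 m i)) ∧
      (↑(Submodule.span ℤ (Set.range (tH m (fun i => s1 m (Sum.inl i) + s2 m i)))) : Set (BB m))
        = {b : BB m | φ b = 0 ∧ ∀ γ ∈ Subgroup.zpowers kg, bAct m γ b = b}) ∧
    (LinearIndependent ℤ (tH m (fun i => s1 m (Sum.inl i) + s3 m i)) ∧
      (↑(Submodule.span ℤ (Set.range (tH m (fun i => s1 m (Sum.inl i) + s3 m i)))) : Set (BB m))
        = {b : BB m | φ b = 0 ∧ ∀ γ ∈ Subgroup.zpowers kh, bAct m γ b = b}) ∧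
    (LinearIndependent ℤ (tH m (fun i => s1 m (Sum.inl i) + s4 m i)) ∧
      (↑(Submodule.span ℤ (Set.range (tH m (fun i => s1 m (Sum.inl i) + s4 m i)))) : Set (BB m))
        = {b : BB m | φ b = 0 ∧ ∀ γ ∈ Subgroup.zpowers (kg * kh), bAct m γ b = b}) :=
  stmt_8_general m ρ hga hgb hhb φ hequiv hfa hfb
end
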